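/- arXiv:1610.09690 — 4 statements merged into one kernel-verified Lean document; each statement's English description precedes it below -/
import Mathlib

section
/- Let N ≡ 7 (mod 8) be a prime and let K = ℚ(√−N). Suppose 𝔭 is a prime ideal of the ring of integers 𝓞_K with absolute norm 2, and suppose the class of 𝔭 in the ideal class group Cl(K) has odd order r. Then 2^(r+2) ≥ N (equivalently, r ≥ log₂(N/4)). -/
/-!
If the class of `𝔭` has order `r`, then `𝔭 ^ r = (x)` with `|N(x)| = 2 ^ r`. Writing
`x = a + b√-N`, the trace `2a` and the norm `a² + N b² = 2 ^ r` are integers, so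
`N (2b)² = 4 · 2 ^ r - (2a)²` is an integer and, `N` being squarefree, `2b ∈ ℤ`. Since `r` is
odd, `2 ^ r` is not a rational square, so `b ≠ 0`; hence `N ≤ N (2b)² ≤ 4 · 2 ^ r`.
-/

open NumberField

section SqrtBasis

variable {F K : Type*} [Field F] [Field K] [Algebra F K] {d : F} {α : K}

theorem linearIndependent_one_of_sq_eq_algebraMap (hd : ¬IsSquare d)
    (hα : α ^ 2 = algebraMap F K d) : LinearIndependent F ![1, α] := by
  rw [LinearIndependent.pair_iff]
  intro s t hst
  obtain rfl : t = 0 := by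
    by_contra ht
    refine hd ⟨-s / t, (algebraMap F K).injective ?_⟩
    have hα' : α = algebraMap F K (-s / t) := by
      rw [Algebra.smul_def, Algebra.smul_def, mul_one] at hst
      rw [map_div₀, map_neg, eq_div_iff (by simpa using ht)]
      linear_combination hst
    rw [← hα, hα', map_mul, pow_two]
  simpa using hst

variable (hK : Module.finrank F K = 2) (hd : ¬IsSquare d) (hα : α ^ 2 = algebraMap F K d)
include hK hd hα

noncomputable def sqrtBasis : Module.Basis (Fin 2) F K :=
  basisOfLinearIndependentOfCardEqFinrank (linearIndependent_one_of_sq_eq_algebraMap hd hα)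
    (by simp [hK])

theorem coe_sqrtBasis : ⇑(sqrtBasis hK hd hα) = ![1, α] :=
  coe_basisOfLinearIndependentOfCardEqFinrank _ _

theorem exists_eq_algebraMap_add_mul (y : K) :
    ∃ a b : F, y = algebraMap F K a + algebraMap F K b * α := by
  refine ⟨(sqrtBasis hK hd hα).repr y 0, (sqrtBasis hK hd hα).repr y 1, ?_⟩
  conv_lhs => rw [← (sqrtBasis hK hd hα).sum_repr y]
  simp [Fin.sum_univ_two, coe_sqrtBasis, Algebra.smul_def]

theorem sqrtBasis_repr (a b : F) :
    (sqrtBasis hK hd hα).repr (algebraMap F K a + algebraMap F K b * α) =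
      Finsupp.single 0 a + Finsupp.single 1 b := by
  have hy : algebraMap F K a + algebraMap F K b * α =
      a • sqrtBasis hK hd hα 0 + b • sqrtBasis hK hd hα 1 := by
    simp [coe_sqrtBasis, Algebra.smul_def]
  rw [hy, map_add, map_smul, map_smul, Module.Basis.repr_self, Module.Basis.repr_self,
    Finsupp.smul_single_one, Finsupp.smul_single_one]

theorem leftMulMatrix_sqrtBasis (a b : F) :
    Algebra.leftMulMatrix (sqrtBasis hK hd hα) (algebraMap F K a + algebraMap F K b * α) =
      !![a, d * b; b, a] := by
  have hmulα : (algebraMap F K a + algebraMap F K b * α) * α =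
      algebraMap F K (d * b) + algebraMap F K a * α := by
    rw [map_mul, ← hα]
    ring
  ext i j
  fin_cases i <;> fin_cases j <;>
    simp [Algebra.leftMulMatrix_eq_repr_mul, coe_sqrtBasis, hmulα, sqrtBasis_repr, -map_mul]

theorem norm_algebraMap_add_mul (a b : F) :
    Algebra.norm F (algebraMap F K a + algebraMap F K b * α) = a ^ 2 - d * b ^ 2 := by
  rw [Algebra.norm_eq_matrix_det (sqrtBasis hK hd hα), leftMulMatrix_sqrtBasis,
    Matrix.det_fin_two_of]
  ring

theorem trace_algebraMap_add_mul (a b : F) :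
    Algebra.trace F K (algebraMap F K a + algebraMap F K b * α) = 2 * a := by
  rw [Algebra.trace_eq_matrix_trace (sqrtBasis hK hd hα), leftMulMatrix_sqrtBasis,
    Matrix.trace_fin_two_of, two_mul]

end SqrtBasis

theorem ClassGroup.isPrincipal_pow_orderOf_mk0 {R : Type*} [CommRing R] [IsDedekindDomain R]
    (I : nonZeroDivisors (Ideal R)) :
    ((I : Ideal R) ^ orderOf (ClassGroup.mk0 I)).IsPrincipal := by
  rw [← SubmonoidClass.coe_pow, ← ClassGroup.mk0_eq_one_iff (SetLike.coe_mem _), map_pow,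
    pow_orderOf_eq_one]

theorem Rat.den_eq_one_of_squarefree_mul_sq {N m : ℤ} (hN : Squarefree N) {c : ℚ}
    (h : N * c ^ 2 = m) : c.den = 1 := by
  have hnum : N * c.num ^ 2 = (c.den : ℤ) ^ 2 * m := by
    rw [← c.num_div_den] at h
    field_simp at h
    exact_mod_cast h
  have hcop : IsCoprime (c.den : ℤ) c.num := by
    rw [Int.isCoprime_iff_gcd_eq_one]
    simpa [Int.gcd, Nat.coprime_comm] using c.reduced
  have hdvd : (c.den : ℤ) * c.den ∣ N := by
    rw [← pow_two]
    exact hcop.pow.dvd_of_dvd_mul_right ⟨m, hnum⟩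
  simpa using Int.ofNat_isUnit.mp (hN _ hdvd)

theorem not_isSquare_two_pow_of_odd {r : ℕ} (hr : Odd r) : ¬IsSquare ((2 : ℚ) ^ r) := by
  obtain ⟨k, rfl⟩ := hr
  rintro ⟨a, ha⟩
  have : IsSquare (2 : ℚ) := ⟨a / 2 ^ k, by field_simp; rw [sq a, ← ha]; ring⟩
  norm_num at this

theorem natCast_le_four_mul_of_sq_add_mul_sq {N : ℕ} (hN : Squarefree N) {a b : ℚ} (hb : b ≠ 0)
    {t n : ℤ} (ht : 2 * a = t) (hn : a ^ 2 + N * b ^ 2 = n) : (N : ℤ) ≤ 4 * n := by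
  have hc : ((N : ℤ) : ℚ) * (2 * b) ^ 2 = ((4 * n - t ^ 2 : ℤ) : ℚ) := by
    push_cast
    rw [← hn, ← ht]
    ring
  obtain ⟨c, hc_eq⟩ : ∃ c : ℤ, (c : ℚ) = 2 * b :=
    ⟨(2 * b).num, Rat.coe_int_num_of_den_eq_one
      (Rat.den_eq_one_of_squarefree_mul_sq (Int.squarefree_natCast.mpr hN) hc)⟩
  have hc0 : c ≠ 0 := by rintro rfl; simp [eq_comm, hb] at hc_eq
  rw [← hc_eq] at hc
  have hc' : (N : ℤ) * c ^ 2 = 4 * n - t ^ 2 := by exact_mod_cast hc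
  have hc1 : 1 ≤ c ^ 2 := by nlinarith [Int.one_le_abs hc0, sq_abs c]
  nlinarith [sq_nonneg t, mul_le_mul_of_nonneg_left hc1 (Int.natCast_nonneg N)]

theorem exists_two_mul_eq_trace_and_sq_add_mul_sq_eq_norm {K : Type*} [Field K] [NumberField K]
    (hK : Module.finrank ℚ K = 2) {N : ℕ} (hN : 0 < N) {α : K} (hα : α ^ 2 = -(N : K))
    (x : 𝓞 K) :
    ∃ a b : ℚ, 2 * a = Algebra.trace ℤ (𝓞 K) x ∧ a ^ 2 + N * b ^ 2 = Algebra.norm ℤ x := by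
  have hd : ¬IsSquare (-(N : ℚ)) := fun ⟨q, hq⟩ ↦ by
    nlinarith [mul_self_nonneg q, (Nat.cast_pos.mpr hN : (0 : ℚ) < N)]
  have hα' : α ^ 2 = algebraMap ℚ K (-N) := by simp [hα]
  obtain ⟨a, b, hab⟩ := exists_eq_algebraMap_add_mul hK hd hα' (x : K)
  refine ⟨a, b, ?_, ?_⟩
  · rw [Algebra.coe_trace_int, hab, trace_algebraMap_add_mul hK hd hα']
  · rw [Algebra.coe_norm_int, hab, norm_algebraMap_add_mul hK hd hα']
    ring

theorem stmt_2_general (N : ℕ) (hN : N.Prime)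
    (K : Type*) [Field K] [NumberField K]
    (hdeg : Module.finrank ℚ K = 2) (α : K) (hα : α ^ 2 = -(N : K))
    (𝔭 : Ideal (𝓞 K)) (h0 : 𝔭 ≠ 0)
    (hnorm : Ideal.absNorm 𝔭 = 2)
    (r : ℕ) (hr_odd : Odd r)
    (hr : orderOf (ClassGroup.mk0 ⟨𝔭, mem_nonZeroDivisors_of_ne_zero h0⟩) = r) :
    N ≤ 2 ^ (r + 2) := by
  obtain ⟨x, hx⟩ := ClassGroup.isPrincipal_pow_orderOf_mk0 ⟨𝔭, mem_nonZeroDivisors_of_ne_zero h0⟩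
  rw [hr] at hx
  have hnorm_abs : (Algebra.norm ℤ x).natAbs = 2 ^ r := by
    rw [← Ideal.absNorm_span_singleton, ← Ideal.submodule_span_eq, ← hx, map_pow, hnorm]
  obtain ⟨a, b, htrace, hnormQ⟩ :=
    exists_two_mul_eq_trace_and_sq_add_mul_sq_eq_norm hdeg hN.pos hα x
  have hnorm_eq : Algebra.norm ℤ x = 2 ^ r := by
    have hnonneg : (0 : ℚ) ≤ Algebra.norm ℤ x := hnormQ ▸ by positivity
    rw [← Int.natAbs_of_nonneg (a := Algebra.norm ℤ x) (mod_cast hnonneg), hnorm_abs]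
    push_cast
    rfl
  have hb : b ≠ 0 := by
    rintro rfl
    have ha : a ^ 2 = 2 ^ r := by simpa [hnorm_eq] using hnormQ
    exact not_isSquare_two_pow_of_odd hr_odd ⟨a, by rw [← ha, sq]⟩
  have key := natCast_le_four_mul_of_sq_add_mul_sq hN.squarefree hb htrace hnormQ
  rw [hnorm_eq] at key
  rw [pow_add]
  omega

/-- Let `N ≡ 7 (mod 8)` be a prime and `K = ℚ(√−N)`. If `𝔭` is a prime ideal of `𝓞 K`
of absolute norm `2` whose class in `Cl(K)` has odd order `r`, then `2^(r+2) ≥ N`. -/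
theorem stmt_2 (N : ℕ) (hN : N.Prime) (hmod : N % 8 = 7)
    (K : Type*) [Field K] [NumberField K]
    (hdeg : Module.finrank ℚ K = 2) (α : K) (hα : α ^ 2 = -(N : K))
    (𝔭 : Ideal (𝓞 K)) (hprime : 𝔭.IsPrime) (h0 : 𝔭 ≠ 0)
    (hnorm : Ideal.absNorm 𝔭 = 2)
    (r : ℕ) (hr_odd : Odd r)
    (hr : orderOf (ClassGroup.mk0 ⟨𝔭, mem_nonZeroDivisors_of_ne_zero h0⟩) = r) :
    N ≤ 2 ^ (r + 2) :=
  stmt_2_general N hN K hdeg α hα 𝔭 h0 hnorm r hr_odd hr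
end

section
/- Let p be a prime, let r be a positive integer not divisible by p, let K be a field of characteristic p equipped with its 𝔽_p-algebra structure, and let ζ ∈ K be a primitive r-th root of unity. Set λ = ζ + ζ⁻¹. Then the degree [𝔽_p(λ) : 𝔽_p] of the subfield of K generated by λ over the prime field 𝔽_p equals the least positive integer m such that p^m ≡ 1 (mod r) or p^m ≡ -1 (mod r). -/
/-!
For `x` algebraic over `𝔽_p`, `x ^ p ^ k = x` holds exactly when the minimal polynomial of `x`
divides `X ^ p ^ k - X`, i.e. when `[𝔽_p⟮x⟯ : 𝔽_p] ∣ k`. For `x = ζ + ζ⁻¹` the Frobenius gives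
`x ^ p ^ k = ζ ^ p ^ k + (ζ ^ p ^ k)⁻¹`, and `y + y⁻¹ = ζ + ζ⁻¹` forces `y = ζ` or `y = ζ⁻¹`;
hence `[𝔽_p⟮x⟯ : 𝔽_p] ∣ k` exactly when `p ^ k ≡ ±1 (mod r)`, and the degree is the least such
`k > 0`.
-/

open Module IntermediateField

theorem add_inv_eq_add_inv_iff {K : Type*} [Field K] {x y : K} (hx : x ≠ 0) (hy : y ≠ 0) :
    x + x⁻¹ = y + y⁻¹ ↔ x = y ∨ x = y⁻¹ := by
  constructor
  · intro h
    have hfac : (x - y) * (x * y - 1) = 0 := by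
      field_simp at h
      linear_combination h
    rcases mul_eq_zero.mp hfac with h' | h'
    · exact .inl (sub_eq_zero.mp h')
    · exact .inr (eq_inv_of_mul_eq_one_left (sub_eq_zero.mp h'))
  · rintro (rfl | rfl)
    · rfl
    · rw [inv_inv, add_comm]

namespace IsPrimitiveRoot

variable {K : Type*} [Field K] {ζ : K} {r : ℕ}

theorem zpow_eq_zpow_iff (hζ : IsPrimitiveRoot ζ r) (hr : r ≠ 0) (a b : ℤ) :
    ζ ^ a = ζ ^ b ↔ (a : ZMod r) = b := by
  have hζ0 := hζ.ne_zero hr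
  rw [← div_eq_one_iff_eq (zpow_ne_zero _ hζ0), ← zpow_sub₀ hζ0, hζ.zpow_eq_one_iff_dvd,
    ZMod.intCast_eq_intCast_iff_dvd_sub, dvd_sub_comm]

theorem pow_add_inv_pow_eq_add_inv_iff (hζ : IsPrimitiveRoot ζ r) (hr : r ≠ 0) (j : ℕ) :
    ζ ^ j + (ζ ^ j)⁻¹ = ζ + ζ⁻¹ ↔ (j : ZMod r) = 1 ∨ (j : ZMod r) = -1 := by
  have hζ0 := hζ.ne_zero hr
  have h1 := hζ.zpow_eq_zpow_iff hr j 1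
  have h2 := hζ.zpow_eq_zpow_iff hr j (-1)
  simp only [zpow_natCast, zpow_one, zpow_neg_one, Int.cast_natCast, Int.cast_one,
    Int.cast_neg] at h1 h2
  rw [add_inv_eq_add_inv_iff (pow_ne_zero _ hζ0) hζ0, h1, h2]

theorem isIntegral_add_inv {F : Type*} [Field F] [Algebra F K] (hζ : IsPrimitiveRoot ζ r)
    (hr : 0 < r) : IsIntegral F (ζ + ζ⁻¹) :=
  have hint {ξ : K} (hξ : IsPrimitiveRoot ξ r) : IsIntegral F ξ :=
    .of_pow hr (hξ.pow_eq_one ▸ isIntegral_one)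
  (hint hζ).add (hint hζ.inv)

end IsPrimitiveRoot

theorem finrank_adjoin_simple_dvd_iff {F K : Type*} [Field F] [Finite F] [Field K] [Algebra F K]
    {x : K} (hx : IsIntegral F x) (n : ℕ) :
    finrank F F⟮x⟯ ∣ n ↔ x ^ Nat.card F ^ n = x := by
  rw [adjoin.finrank hx, (minpoly.irreducible hx).natDegree_dvd_iff_dvd_X_pow_card_pow_sub_X,
    minpoly.dvd_iff]
  simp [sub_eq_zero]

theorem stmt_7_general (p r : ℕ) [Fact p.Prime] (hr : 0 < r)
    (K : Type*) [Field K] [Algebra (ZMod p) K] [CharP K p]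
    (ζ : K) (hζ : IsPrimitiveRoot ζ r) (m : ℕ)
    (hm : IsLeast {k : ℕ | 0 < k ∧ ((p : ZMod r) ^ k = 1 ∨ (p : ZMod r) ^ k = -1)} m) :
    Module.finrank (ZMod p) (IntermediateField.adjoin (ZMod p) {ζ + ζ⁻¹}) = m := by
  have hint : IsIntegral (ZMod p) (ζ + ζ⁻¹) := hζ.isIntegral_add_inv hr
  have : FiniteDimensional (ZMod p) (ZMod p)⟮ζ + ζ⁻¹⟯ := adjoin.finiteDimensional hint
  have finrank_dvd_iff (k : ℕ) : finrank (ZMod p) (ZMod p)⟮ζ + ζ⁻¹⟯ ∣ k ↔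
      (p : ZMod r) ^ k = 1 ∨ (p : ZMod r) ^ k = -1 := by
    rw [finrank_adjoin_simple_dvd_iff hint, Nat.card_zmod, add_pow_char_pow, inv_pow,
      hζ.pow_add_inv_pow_eq_add_inv_iff hr.ne', Nat.cast_pow]
  exact le_antisymm (Nat.le_of_dvd hm.1.1 ((finrank_dvd_iff m).2 hm.1.2))
    (hm.2 ⟨finrank_pos, (finrank_dvd_iff _).1 dvd_rfl⟩)

/-- Let `p` be a prime, `r` a positive integer not divisible by `p`, `K` a field of
characteristic `p` with its `𝔽_p`-algebra structure, and `ζ ∈ K` a primitive `r`-th root of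
unity. Then `[𝔽_p(ζ + ζ⁻¹) : 𝔽_p]` equals the least positive integer `m` such that
`p^m ≡ 1 (mod r)` or `p^m ≡ -1 (mod r)`. -/
theorem stmt_7 (p r : ℕ) (hp : p.Prime) [Fact p.Prime] (hr : 0 < r) (hpr : ¬ p ∣ r)
    (K : Type*) [Field K] [Algebra (ZMod p) K] [CharP K p]
    (ζ : K) (hζ : IsPrimitiveRoot ζ r) (m : ℕ)
    (hm : IsLeast {k : ℕ | 0 < k ∧ ((p : ZMod r) ^ k = 1 ∨ (p : ZMod r) ^ k = -1)} m) :
    Module.finrank (ZMod p) (IntermediateField.adjoin (ZMod p) {ζ + ζ⁻¹}) = m :=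
  stmt_7_general p r hr K ζ hζ m hm
end

section
/- Let F be a field, let V be a finite-dimensional F-vector space, let T be a commutative F-subalgebra of End_F(V), and let t ∈ T. Suppose g ∈ F[X] is a monic irreducible polynomial of degree m dividing the characteristic polynomial of t. Then there exists an F-subspace W of V that is stable under every element of T, is simple as a T-module (W ≠ 0, and the only T-stable subspaces of V contained in W are 0 and W), and satisfies dim_F W ≥ m. -/
/-!
Since `T` is commutative and contains `aeval t g`, the kernel `K` of `g(t)` is `T`-stable, and it
is nonzero: over `F[X]/(g)` the root of `g` is an eigenvalue of the base change of `t`, and base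
change along a field extension preserves injectivity. A minimal nonzero `T`-stable subspace `W`
of `K` exists by finite dimensionality and is simple. The restriction of `t` to `W` is killed by
the irreducible `g`, so its minimal polynomial is associated to `g`; it divides the
characteristic polynomial of `t|_W`, whose degree is `dim W`.
-/

open Polynomial Module LinearMap

namespace Submodule

variable {R M : Type*} [Semiring R] [AddCommMonoid M] [Module R M]

def IsInvariant (S : Set (End R M)) (W : Submodule R M) : Prop :=
  ∀ s ∈ S, ∀ w ∈ W, s w ∈ W

theorem isInvariant_ker_of_commute {S : Set (End R M)} {f : End R M}
    (h : ∀ s ∈ S, Commute s f) : (ker f).IsInvariant S := fun s hs w hw => by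
  rw [mem_ker, ← End.mul_apply, ← (h s hs).eq, End.mul_apply, mem_ker.mp hw, map_zero]

theorem exists_le_minimal_isInvariant [IsArtinian R M] {S : Set (End R M)} {K : Submodule R M}
    (hKS : K.IsInvariant S) (hK : K ≠ ⊥) :
    ∃ W ≤ K, W.IsInvariant S ∧ W ≠ ⊥ ∧
      ∀ W' : Submodule R M, W'.IsInvariant S → W' ≤ W → W' = ⊥ ∨ W' = W := by
  obtain ⟨W, ⟨hWK, hWS, hW⟩, hmin⟩ :=
    wellFounded_lt.has_min {W | W ≤ K ∧ W.IsInvariant S ∧ W ≠ ⊥} ⟨K, le_rfl, hKS, hK⟩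
  refine ⟨W, hWK, hWS, hW, fun W' hW'S hW'W => or_iff_not_imp_left.mpr fun hW' => ?_⟩
  exact hW'W.lt_or_eq.resolve_left (hmin W' ⟨hW'W.trans hWK, hW'S, hW'⟩)

end Submodule

namespace Module.End

theorem aeval_restrict_apply {R M : Type*} [CommSemiring R] [AddCommMonoid M] [Module R M]
    {f : End R M} {W : Submodule R M} (hf : ∀ x ∈ W, f x ∈ W) (p : R[X]) (x : W) :
    (aeval (f.restrict hf) p x : M) = aeval f p x := by
  induction p using Polynomial.induction_on' with
  | add p q hp hq => simp [hp, hq]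
  | monomial n a =>
    simp only [aeval_monomial, mul_apply, algebraMap_end_apply, Submodule.coe_smul]
    rw [pow_restrict, restrict_apply]

theorem aeval_baseChange {R M : Type*} [CommSemiring R] [AddCommMonoid M] [Module R M]
    (A : Type*) [CommSemiring A] [Algebra R A] (f : End R M) (p : R[X]) :
    aeval (f.baseChange A) (p.map (algebraMap R A)) = (aeval f p).baseChange A := by
  rw [aeval_map_algebraMap]
  exact aeval_algHom_apply (End.baseChangeHom R A M) f p

variable {F V : Type*} [Field F] [AddCommGroup V] [Module F V] [FiniteDimensional F V]

theorem ker_aeval_ne_bot_of_dvd_charpoly {t : End F V} {g : F[X]} (hg : Irreducible g)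
    (hdvd : g ∣ t.charpoly) : ker (aeval t g) ≠ ⊥ := by
  have : Fact (Irreducible g) := ⟨hg⟩
  set μ := AdjoinRoot.root g
  have hroot : (g.map (algebraMap F (AdjoinRoot g))).IsRoot μ := AdjoinRoot.isRoot_root g
  have hμ : HasEigenvalue (t.baseChange (AdjoinRoot g)) μ := by
    rw [hasEigenvalue_iff_isRoot_charpoly, charpoly_baseChange]
    obtain ⟨q, hq⟩ := hdvd
    rw [hq, Polynomial.map_mul, IsRoot, eval_mul, hroot.eq_zero, zero_mul]
  obtain ⟨v, hv⟩ := hμ.exists_hasEigenvector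
  intro hker
  have hinj : Function.Injective ((aeval t g).baseChange (AdjoinRoot g)) := by
    rw [baseChange_eq_ltensor]
    exact Module.Flat.lTensor_preserves_injective_linearMap _ (ker_eq_bot.mp hker)
  refine hv.2 (hinj ?_)
  rw [← aeval_baseChange, aeval_apply_of_hasEigenvector hv, hroot.eq_zero, zero_smul, map_zero]

theorem natDegree_le_finrank_of_le_ker_aeval {t : End F V} {g : F[X]} (hg : Irreducible g)
    {W : Submodule F V} (htW : ∀ x ∈ W, t x ∈ W) (hW : W ≠ ⊥) (hWg : W ≤ ker (aeval t g)) :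
    g.natDegree ≤ finrank F W := by
  have : Nontrivial W := Submodule.nontrivial_iff_ne_bot.mpr hW
  set tW := t.restrict htW
  have hg_tW : aeval tW g = 0 :=
    LinearMap.ext fun x => Subtype.ext <| (aeval_restrict_apply htW g x).trans (hWg x.2)
  have hassoc : Associated g (minpoly F tW) :=
    (hg.dvd_iff.mp (minpoly.dvd F tW hg_tW)).resolve_left (minpoly.not_isUnit F tW)
  calc g.natDegree ≤ tW.charpoly.natDegree :=
        natDegree_le_of_dvd (hassoc.dvd.trans (minpoly_dvd_charpoly tW))
          (charpoly_monic tW).ne_zero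
    _ = finrank F W := charpoly_natDegree tW

end Module.End

theorem stmt_11_general (F : Type*) [Field F] (V : Type*) [AddCommGroup V] [Module F V]
    [FiniteDimensional F V]
    (T : Subalgebra F (Module.End F V)) (hcomm : ∀ a ∈ T, ∀ b ∈ T, a * b = b * a)
    (t : Module.End F V) (ht : t ∈ T)
    (g : Polynomial F) (hirr : Irreducible g)
    (m : ℕ) (hdeg : g.natDegree = m)
    (hdvd : g ∣ LinearMap.charpoly t) :
    ∃ W : Submodule F V,
      (∀ s ∈ T, ∀ w ∈ W, s w ∈ W) ∧
      W ≠ ⊥ ∧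
      (∀ W' : Submodule F V, (∀ s ∈ T, ∀ w ∈ W', s w ∈ W') → W' ≤ W → W' = ⊥ ∨ W' = W) ∧
      m ≤ Module.finrank F W := by
  have hgt : aeval t g ∈ T := by
    simpa only [aeval_subalgebra_coe] using (aeval (⟨t, ht⟩ : T) g).2
  have hK : (ker (aeval t g)).IsInvariant T :=
    Submodule.isInvariant_ker_of_commute fun s hs => hcomm s hs _ hgt
  have hK0 : ker (aeval t g) ≠ ⊥ := End.ker_aeval_ne_bot_of_dvd_charpoly hirr hdvd
  obtain ⟨W, hWK, hWT, hW, hWmin⟩ := Submodule.exists_le_minimal_isInvariant hK hK0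
  exact ⟨W, hWT, hW, hWmin,
    hdeg ▸ End.natDegree_le_finrank_of_le_ker_aeval hirr (hWT t ht) hW hWK⟩

/-- Let `F` be a field, `V` a finite-dimensional `F`-vector space, `T` a commutative
`F`-subalgebra of `End_F(V)`, and `t ∈ T`. If `g ∈ F[X]` is monic irreducible of degree `m`
and divides the characteristic polynomial of `t`, then there is an `F`-subspace `W ⊆ V`
stable under every element of `T`, simple as a `T`-module, with `dim_F W ≥ m`. -/
theorem stmt_11 (F : Type*) [Field F] (V : Type*) [AddCommGroup V] [Module F V]
    [FiniteDimensional F V]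
    (T : Subalgebra F (Module.End F V)) (hcomm : ∀ a ∈ T, ∀ b ∈ T, a * b = b * a)
    (t : Module.End F V) (ht : t ∈ T)
    (g : Polynomial F) (hmonic : g.Monic) (hirr : Irreducible g)
    (m : ℕ) (hdeg : g.natDegree = m)
    (hdvd : g ∣ LinearMap.charpoly t) :
    ∃ W : Submodule F V,
      (∀ s ∈ T, ∀ w ∈ W, s w ∈ W) ∧
      W ≠ ⊥ ∧
      (∀ W' : Submodule F V, (∀ s ∈ T, ∀ w ∈ W', s w ∈ W') → W' ≤ W → W' = ⊥ ∨ W' = W) ∧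
      m ≤ Module.finrank F W :=
  stmt_11_general F V T hcomm t ht g hirr m hdeg hdvd
end

section
/- Let V be a finite-dimensional ℚ-vector space, let T be a commutative ℚ-subalgebra of End_ℚ(V), and let t ∈ T be an element whose characteristic polynomial f has integer coefficients. Let p be a prime and suppose the reduction of f modulo p has an irreducible factor of degree m in 𝔽_p[X]. Then there exists a ℚ-subspace W of V that is stable under every element of T, is simple as a T-module, and satisfies dim_ℚ W ≥ m. -/
/-!
Factor `f` into irreducibles in `ℤ[X]`: the prime `g` divides the reduction of some factor `h`,
so `deg h ≥ m`, and by Gauss's lemma the image `q` of `h` in `ℚ[X]` is irreducible; it divides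
the characteristic polynomial of `t`. Hence `ker q(t)` is nonzero, and it is `T`-stable because
`T` is commutative, so it contains a simple `T`-submodule `W`. Since `q(t)` vanishes on `W` and
`q` is irreducible, `q` is the minimal polynomial of `t` on `W`, whence `dim W ≥ deg q ≥ m`.
-/

open Polynomial

theorem UniqueFactorizationMonoid.exists_irreducible_dvd_and_dvd_map
    {α β F : Type*} [CommMonoidWithZero α] [UniqueFactorizationMonoid α]
    [CommMonoidWithZero β] [FunLike F α β] [MonoidHomClass F α β] (φ : F)
    {a : α} (ha : a ≠ 0) {g : β} (hg : Prime g) (hdvd : g ∣ φ a) :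
    ∃ b, Irreducible b ∧ b ∣ a ∧ g ∣ φ b := by
  have hprod : g ∣ ((factors a).map φ).prod := by
    rw [Multiset.prod_hom]
    exact hdvd.trans (map_dvd φ (factors_prod ha).symm.dvd)
  obtain ⟨b, hb, hgb⟩ := hg.exists_mem_multiset_map_dvd hprod
  exact ⟨b, irreducible_of_factor b hb, dvd_of_mem_factors hb, hgb⟩

theorem Polynomial.exists_irreducible_dvd_natDegree_le_of_dvd_map
    {R S : Type*} [CommRing R] [IsDomain R] [UniqueFactorizationMonoid R]
    [CommRing S] [IsDomain S] (φ : R →+* S) {f : R[X]} (hf : f.map φ ≠ 0)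
    {g : S[X]} (hg : Prime g) (hdvd : g ∣ f.map φ) :
    ∃ h : R[X], Irreducible h ∧ h ∣ f ∧ g.natDegree ≤ h.natDegree := by
  obtain ⟨h, hh, hhf, hgh⟩ := UniqueFactorizationMonoid.exists_irreducible_dvd_and_dvd_map
    (mapRingHom φ) (fun h0 => hf (by rw [h0, Polynomial.map_zero])) hg hdvd
  have hh0 : h.map φ ≠ 0 := fun h0 => hf (zero_dvd_iff.1 (h0 ▸ Polynomial.map_dvd φ hhf))
  exact ⟨h, hh, hhf, (natDegree_le_of_dvd hgh hh0).trans natDegree_map_le⟩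

theorem Module.End.baseChangeHom_aeval {K L V : Type*} [CommRing K] [CommRing L] [Algebra K L]
    [AddCommGroup V] [Module K V] (t : Module.End K V) (q : K[X]) :
    Module.End.baseChangeHom K L V (aeval t q) =
      aeval (t.baseChange L) (q.map (algebraMap K L)) := by
  rw [← aeval_algHom_apply, aeval_map_algebraMap]
  rfl

theorem Module.End.ker_aeval_ne_bot_of_irreducible_dvd_charpoly
    {K V : Type*} [Field K] [AddCommGroup V] [Module K V] [FiniteDimensional K V]
    (t : Module.End K V) {q : K[X]} (hq : Irreducible q) (hdvd : q ∣ t.charpoly) :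
    LinearMap.ker (aeval t q) ≠ ⊥ := by
  -- Over `K[X]/(q)` the root of `q` is an eigenvalue of `t ⊗ 1`; `q(t) ⊗ 1` kills its eigenvectors.
  have : Fact (Irreducible q) := ⟨hq⟩
  let L := AdjoinRoot q
  have hroot : (q.map (algebraMap K L)).IsRoot (AdjoinRoot.root q) := by
    rw [IsRoot, eval_map_algebraMap, AdjoinRoot.aeval_eq, AdjoinRoot.mk_self]
  have heig : Module.End.HasEigenvalue (t.baseChange L) (AdjoinRoot.root q) := by
    rw [hasEigenvalue_iff_isRoot_charpoly, LinearMap.charpoly_baseChange]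
    exact hroot.dvd (Polynomial.map_dvd _ hdvd)
  obtain ⟨x, hx⟩ := heig.exists_hasEigenvector
  intro hker
  have hunit : IsUnit (Module.End.baseChangeHom K L V (aeval t q)) :=
    ((LinearMap.isUnit_iff_ker_eq_bot _).2 hker).map _
  refine hx.2 (LinearMap.ker_eq_bot.1 ((LinearMap.isUnit_iff_ker_eq_bot _).1 hunit) ?_)
  rw [map_zero, baseChangeHom_aeval, aeval_apply_of_hasEigenvector hx, hroot.eq_zero, zero_smul]

theorem LinearMap.apply_mem_ker_of_commute {R V : Type*} [CommRing R] [AddCommGroup V] [Module R V]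
    {u s : Module.End R V} (h : Commute u s) {w : V} (hw : w ∈ LinearMap.ker u) :
    s w ∈ LinearMap.ker u := by
  rw [LinearMap.mem_ker] at hw ⊢
  rw [← Module.End.mul_apply, h.eq, Module.End.mul_apply, hw, map_zero]

theorem Submodule.exists_minimal_invariant_le {R V : Type*} [Ring R] [AddCommGroup V] [Module R V]
    [IsArtinian R V] (T : Set (Module.End R V)) {U : Submodule R V} (hU : U ≠ ⊥)
    (hUT : ∀ s ∈ T, ∀ u ∈ U, s u ∈ U) :
    ∃ W ≤ U, (∀ s ∈ T, ∀ w ∈ W, s w ∈ W) ∧ W ≠ ⊥ ∧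
      ∀ W' : Submodule R V, (∀ s ∈ T, ∀ w ∈ W', s w ∈ W') → W' ≤ W → W' = ⊥ ∨ W' = W := by
  obtain ⟨W, ⟨hW, hWU, hWT⟩, hmin⟩ := IsArtinian.set_has_minimal
    {W : Submodule R V | W ≠ ⊥ ∧ W ≤ U ∧ ∀ s ∈ T, ∀ w ∈ W, s w ∈ W} ⟨U, hU, le_rfl, hUT⟩
  refine ⟨W, hWU, hWT, hW, fun W' hW'T hW'W => or_iff_not_imp_left.2 fun hW' => ?_⟩
  by_contra hne
  exact hmin W' ⟨hW', hW'W.trans hWU, hW'T⟩ (lt_of_le_of_ne hW'W hne)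

theorem LinearMap.aeval_restrict_apply {R V : Type*} [CommRing R] [AddCommGroup V] [Module R V]
    (t : Module.End R V) (q : R[X]) {W : Submodule R V} (h : ∀ w ∈ W, t w ∈ W) (w : W) :
    (aeval (t.restrict h) q w : V) = aeval t q w := by
  induction q using Polynomial.induction_on' with
  | add r s hr hs => simp [hr, hs]
  | monomial n a => simp [Module.End.pow_restrict n h]

theorem Module.End.natDegree_le_finrank_of_aeval_eq_zero {K W : Type*} [Field K] [AddCommGroup W]
    [Module K W] [FiniteDimensional K W] [Nontrivial W] (φ : Module.End K W) {q : K[X]}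
    (hq : Irreducible q) (h : aeval φ q = 0) : q.natDegree ≤ Module.finrank K W :=
  calc q.natDegree = (q * C q.leadingCoeff⁻¹).natDegree :=
        (natDegree_mul_C (inv_ne_zero (leadingCoeff_ne_zero.2 hq.ne_zero))).symm
    _ = (minpoly K φ).natDegree := by rw [minpoly.eq_of_irreducible hq h]
    _ ≤ φ.charpoly.natDegree :=
        natDegree_le_of_dvd (LinearMap.minpoly_dvd_charpoly φ) φ.charpoly_monic.ne_zero
    _ = Module.finrank K W := φ.charpoly_natDegree

theorem Submodule.natDegree_le_finrank_of_le_ker_aeval {K V : Type*} [Field K] [AddCommGroup V]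
    [Module K V] [FiniteDimensional K V] (t : Module.End K V) {q : K[X]} (hq : Irreducible q)
    {W : Submodule K V} (hW : W ≠ ⊥) (htW : ∀ w ∈ W, t w ∈ W)
    (hWq : W ≤ LinearMap.ker (aeval t q)) : q.natDegree ≤ Module.finrank K W := by
  have : Nontrivial W := Submodule.nontrivial_iff_ne_bot.2 hW
  refine Module.End.natDegree_le_finrank_of_aeval_eq_zero (t.restrict htW) hq
    (LinearMap.ext fun w => Subtype.ext ?_)
  rw [LinearMap.aeval_restrict_apply]
  exact hWq w.2

/-- Let `V` be a finite-dimensional `ℚ`-vector space, `T` a commutative `ℚ`-subalgebra of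
`End_ℚ(V)`, and `t ∈ T` whose characteristic polynomial has integer coefficients, i.e.,
is the image of some `f ∈ ℤ[X]`. If `p` is a prime and the reduction of `f` mod `p` has an
irreducible factor of degree `m` in `𝔽_p[X]`, then there is a `ℚ`-subspace `W ⊆ V` stable
under every element of `T`, simple as a `T`-module, with `dim_ℚ W ≥ m`. -/
theorem stmt_12 (V : Type*) [AddCommGroup V] [Module ℚ V] [FiniteDimensional ℚ V]
    (T : Subalgebra ℚ (Module.End ℚ V)) (hcomm : ∀ a ∈ T, ∀ b ∈ T, a * b = b * a)
    (t : Module.End ℚ V) (ht : t ∈ T)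
    (f : Polynomial ℤ) (hf : f.map (Int.castRingHom ℚ) = LinearMap.charpoly t)
    (p : ℕ) (hp : p.Prime)
    (g : Polynomial (ZMod p)) (hirr : Irreducible g) (m : ℕ) (hdeg : g.natDegree = m)
    (hdvd : g ∣ f.map (Int.castRingHom (ZMod p))) :
    ∃ W : Submodule ℚ V,
      (∀ s ∈ T, ∀ w ∈ W, s w ∈ W) ∧
      W ≠ ⊥ ∧
      (∀ W' : Submodule ℚ V, (∀ s ∈ T, ∀ w ∈ W', s w ∈ W') → W' ≤ W → W' = ⊥ ∨ W' = W) ∧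
      m ≤ Module.finrank ℚ W := by
  have : Fact p.Prime := ⟨hp⟩
  have hfm : f.Monic := (RingHom.injective_int _).monic_map_iff.2 (hf ▸ t.charpoly_monic)
  obtain ⟨h, hh, hhf, hgh⟩ := exists_irreducible_dvd_natDegree_le_of_dvd_map _
    (hfm.map _).ne_zero hirr.prime hdvd
  set q := h.map (Int.castRingHom ℚ)
  have hq : Irreducible q := (IsPrimitive.Int.irreducible_iff_irreducible_map_cast
    (isPrimitive_of_dvd hfm.isPrimitive hhf)).1 hh
  have hqT : aeval t q ∈ T := Algebra.adjoin_le (Set.singleton_subset_iff.2 ht)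
    (aeval_mem_adjoin_singleton ℚ t)
  obtain ⟨W, hWq, hWT, hW, hWsimple⟩ := Submodule.exists_minimal_invariant_le T
    (t.ker_aeval_ne_bot_of_irreducible_dvd_charpoly hq (hf ▸ Polynomial.map_dvd _ hhf))
    fun s hs _ => LinearMap.apply_mem_ker_of_commute (hcomm _ hqT s hs)
  refine ⟨W, hWT, hW, hWsimple, ?_⟩
  calc m ≤ q.natDegree := by rw [natDegree_map_eq_of_injective (RingHom.injective_int _)]; omega
    _ ≤ Module.finrank ℚ W := Submodule.natDegree_le_finrank_of_le_ker_aeval t hq hW (hWT t ht) hWq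
end
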